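/- arXiv:1302.1900 — 7 statements merged into one kernel-verified Lean document; each statement's English description precedes it below -/
import Mathlib

section
/- Fix an integer m ≥ 2 and let (t_n)_{n≥0} be the TM_m sequence. Then there is no nonnegative integer j with t_j = t_{j+1} = t_{j+2}; that is, the TM_m sequence never takes the same value at three consecutive indices. -/
/-!
If the last base-`m` digit of `n` is not `m - 1`, passing to `n + 1` raises the digit sum by
exactly one, so `t (n + 1) ≠ t n`. Hence `t j = t (j + 1)` forces `j ≡ -1 (mod m)`, which cannot
hold for both `j` and `j + 1`.
-/

/-- The `TM_m` sequence: `t n = (sum of base-m digits of n) % m`. -/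
def tm (m n : ℕ) : ℕ := (Nat.digits m n).sum % m

theorem Nat.digits_sum_succ_of_mod_add_one_lt {b n : ℕ} (h : n % b + 1 < b) :
    (Nat.digits b (n + 1)).sum = (Nat.digits b n).sum + 1 := by
  have hb : 1 < b := by omega
  have hsucc : n + 1 = (n % b + 1) + b * (n / b) := by
    have := Nat.mod_add_div n b
    omega
  rw [hsucc, Nat.digits_add b hb _ _ h (Or.inl (Nat.succ_ne_zero _))]
  rcases eq_or_ne n 0 with rfl | hn
  · simp
  · rw [Nat.digits_eq_cons_digits_div hb hn, List.sum_cons, List.sum_cons]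
    omega

theorem tm_succ_ne_of_mod_add_one_lt {m n : ℕ} (h : n % m + 1 < m) : tm m (n + 1) ≠ tm m n := by
  intro heq
  have hmod : (Nat.digits m n).sum + 1 ≡ (Nat.digits m n).sum + 0 [MOD m] := by
    rw [add_zero]
    rwa [tm, tm, Nat.digits_sum_succ_of_mod_add_one_lt h] at heq
  have hm : m ∣ 1 := Nat.modEq_zero_iff_dvd.mp (Nat.ModEq.add_left_cancel' _ hmod)
  rw [Nat.dvd_one.mp hm] at h
  omega

theorem mod_add_one_eq_of_tm_eq_tm_succ {m n : ℕ} (hm : 0 < m) (h : tm m n = tm m (n + 1)) :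
    n % m + 1 = m := by
  by_contra hne
  have := Nat.mod_lt n hm
  exact tm_succ_ne_of_mod_add_one_lt (by omega) h.symm

/-- The `TM_m` sequence never takes the same value at three consecutive indices. -/
theorem tm_no_three_consecutive_equal (m : ℕ) (hm : 2 ≤ m) :
    ¬ ∃ j : ℕ, tm m j = tm m (j + 1) ∧ tm m (j + 1) = tm m (j + 2) := by
  rintro ⟨j, h₀, h₁⟩
  have hj := mod_add_one_eq_of_tm_eq_tm_succ (by omega) h₀
  have hj₁ := mod_add_one_eq_of_tm_eq_tm_succ (by omega) h₁
  have hj₁_zero : (j + 1) % m = 0 := by rw [← Nat.mod_add_mod, hj, Nat.mod_self]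
  omega
end

section
/- For every integer m ≥ 2, the TM_m sequence (t_n)_{n≥0} is not eventually periodic; that is, there do not exist a nonnegative integer a and a positive integer b such that t_{a+n} = t_{a+n+b} for all nonnegative integers n. -/
open Nat

theorem Nat.digits_sum_add_pow_mul {b k n c : ℕ} (hb : 1 < b) (hn : n < b ^ k) :
    (digits b (n + b ^ k * c)).sum = (digits b n).sum + (digits b c).sum := by
  rcases c.eq_zero_or_pos with rfl | hc
  · simp
  obtain ⟨j, rfl⟩ := Nat.exists_eq_add_of_le ((digits_length_le_iff hb n).2 hn)
  rw [← digits_append_zeroes_append_digits hb hc]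
  simp

theorem tm_add_pow_mul {m k n : ℕ} (c : ℕ) (hm : 1 < m) (hn : n < m ^ k) :
    tm m (n + m ^ k * c) = (tm m n + tm m c) % m := by
  unfold tm
  rw [digits_sum_add_pow_mul hm hn, Nat.add_mod]

theorem tm_of_lt {m n : ℕ} (hn : n < m) : tm m n = n := by
  rcases n.eq_zero_or_pos with rfl | hn0
  · simp [tm]
  simp [tm, digits_of_lt m n hn0.ne' hn, Nat.mod_eq_of_lt hn]

theorem tm_pow {m : ℕ} (k : ℕ) (hm : 1 < m) : tm m (m ^ k) = 1 := by
  simpa [tm_of_lt hm, tm_of_lt (zero_lt_one.trans hm), Nat.mod_eq_of_lt hm] using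
    tm_add_pow_mul (k := k) 1 hm (Nat.pow_pos (zero_lt_one.trans hm))

/-- The `TM_m` sequence is not eventually periodic. -/
theorem tm_not_eventually_periodic (m : ℕ) (hm : 2 ≤ m) :
    ¬ ∃ (a b : ℕ), 0 < b ∧ ∀ n : ℕ, tm m (a + n) = tm m (a + n + b) := by
  rintro ⟨a, b, hb, hper⟩
  have hm1 : 1 < m := hm
  have periodic : ∀ x, a ≤ x → tm m (x + b) = tm m x := fun x hx => by
    simpa [Nat.add_sub_cancel' hx] using (hper (x - a)).symm
  obtain ⟨k, hk⟩ : ∃ k, a + b ≤ m ^ k := ⟨a + b, (Nat.lt_pow_self hm1).le⟩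
  set x := m ^ k - b
  have hx_add : x + b = m ^ k := by omega
  have hx_lt : x < m ^ k := by omega
  have hx_succ : x + m ^ k * (m - 1) + b = m ^ (k + 1) := by
    have : m ^ k ≤ m ^ k * m := Nat.le_mul_of_pos_right _ (by omega)
    rw [add_right_comm, hx_add, pow_succ, Nat.mul_sub_one]
    omega
  have h₁ : tm m x = 1 := by rw [← periodic x (by omega), hx_add, tm_pow k hm1]
  have h₂ : tm m (x + m ^ k * (m - 1)) = 1 := by
    rw [← periodic _ (by omega), hx_succ, tm_pow (k + 1) hm1]
  have h₃ := tm_add_pow_mul (m - 1) hm1 hx_lt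
  rw [h₁, h₂, tm_of_lt (by omega : m - 1 < m), show 1 + (m - 1) = m by omega, Nat.mod_self] at h₃
  exact one_ne_zero h₃
end

section
/- The TM_2 sequence (the classical Thue–Morse sequence) is palindromic: there exists a strictly increasing sequence of positive integers (n_j)_{j≥1} such that for every j and every k ∈ {0,…,n_j}, t_k(2) = t_{n_j − k}(2). -/
/-- A sequence `x` is palindromic if there is a strictly increasing sequence of
positive integers `nj` such that each initial segment `x 0, ..., x (nj j)` is a
palindrome. -/
def Palindromic (x : ℕ → ℕ) : Prop :=
  ∃ nj : ℕ → ℕ, StrictMono nj ∧ (∀ j, 0 < nj j) ∧ ∀ j, ∀ k ≤ nj j, x k = x (nj j - k)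

/-!
Reading `k < 2 ^ m` in binary with `m` digits, `2 ^ m - 1 - k` is its bitwise complement, so the
two binary digit sums add up to `m`. When `m` is even they have the same parity, i.e. the
prefix `t 0, …, t (2 ^ m - 1)` of the Thue–Morse sequence is a palindrome; take `m = 2j + 2`.
-/

namespace Nat

theorem digits_sum_eq_mod_add_digits_sum_div {b : ℕ} (hb : 1 < b) (n : ℕ) :
    (digits b n).sum = n % b + (digits b (n / b)).sum := by
  rcases n.eq_zero_or_pos with rfl | hn
  · simp
  · rw [digits_def' hb hn, List.sum_cons]

theorem digits_sum_add_mul {b : ℕ} (hb : 1 < b) {r : ℕ} (hr : r < b) (q : ℕ) :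
    (digits b (r + b * q)).sum = r + (digits b q).sum := by
  rw [digits_sum_eq_mod_add_digits_sum_div hb, Nat.add_mul_mod_self_left, Nat.mod_eq_of_lt hr,
    Nat.add_mul_div_left _ _ (by omega), Nat.div_eq_of_lt hr, zero_add]

theorem digits_sum_add_digits_sum_pow_sub_one_sub {b : ℕ} (hb : 1 < b) :
    ∀ {m k : ℕ}, k < b ^ m → (digits b k).sum + (digits b (b ^ m - 1 - k)).sum = m * (b - 1)
  | 0, k, hk => by simp_all
  | m + 1, k, hk => by
    obtain ⟨r, q, hr, rfl⟩ : ∃ r q, r < b ∧ k = r + b * q :=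
      ⟨k % b, k / b, Nat.mod_lt _ (by omega), (Nat.mod_add_div k b).symm⟩
    have hq : q < b ^ m := by
      rw [pow_succ'] at hk
      by_contra! h
      nlinarith [Nat.mul_le_mul_left b h]
    have hsplit : b * (b ^ m - 1 - q) + b * q + b = b * b ^ m := by
      rw [← Nat.mul_add, ← Nat.mul_succ]; congr 1; omega
    have hc : b ^ (m + 1) - 1 - (r + b * q) = (b - 1 - r) + b * (b ^ m - 1 - q) := by
      rw [pow_succ']; omega
    rw [hc, digits_sum_add_mul hb hr, digits_sum_add_mul hb (by omega), add_mul, one_mul,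
      ← digits_sum_add_digits_sum_pow_sub_one_sub hb hq]
    omega

end Nat

theorem tm_two_two_pow_sub_one_sub_of_even {m k : ℕ} (hm : Even m) (hk : k < 2 ^ m) :
    tm 2 (2 ^ m - 1 - k) = tm 2 k := by
  have hsum := Nat.digits_sum_add_digits_sum_pow_sub_one_sub one_lt_two hk
  obtain ⟨l, rfl⟩ := hm
  unfold tm
  omega

/-- The classical Thue–Morse sequence is palindromic. -/
theorem tm_two_palindromic : Palindromic (tm 2) := by
  refine ⟨fun j => 2 ^ (2 * j + 2) - 1, fun a b hab => ?_, fun j => ?_, fun j k hk => ?_⟩ <;>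
    beta_reduce at *
  · have : 2 ^ (2 * a + 2) < 2 ^ (2 * b + 2) := Nat.pow_lt_pow_right one_lt_two (by omega)
    have : 1 ≤ 2 ^ (2 * a + 2) := Nat.one_le_two_pow
    omega
  · have : 1 < 2 ^ (2 * j + 2) := Nat.one_lt_two_pow (by omega)
    omega
  · have : 1 ≤ 2 ^ (2 * j + 2) := Nat.one_le_two_pow
    exact (tm_two_two_pow_sub_one_sub_of_even ⟨j + 1, by ring⟩ (by omega)).symm
end

section
/- For every integer m ≥ 3, the TM_m sequence (t_n)_{n≥0} is not eventually palindromic: there is no N ≥ 0 such that the shifted sequence (t_{n+N})_{n≥0} is palindromic. -/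
theorem Palindromic.exists_ge {x : ℕ → ℕ} (hx : Palindromic x) (L : ℕ) :
    ∃ n ≥ L, ∀ k ≤ n, x k = x (n - k) := by
  obtain ⟨nj, hmono, -, hpal⟩ := hx
  exact ⟨nj L, hmono.le_apply, hpal L⟩

theorem Nat.digits_sum_add_mul_s11 {m r : ℕ} (hm : 1 < m) (hr : r < m) (q : ℕ) :
    (Nat.digits m (r + m * q)).sum = r + (Nat.digits m q).sum := by
  rcases Nat.eq_zero_or_pos r with rfl | hr0
  · rcases Nat.eq_zero_or_pos q with rfl | hq0
    · simp
    · rw [Nat.digits_add m hm 0 q hr (.inr hq0.ne'), List.sum_cons]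
  · rw [Nat.digits_add m hm r q hr (.inl hr0.ne'), List.sum_cons]

theorem Nat.digits_sum_succ_of_not_dvd {m a : ℕ} (hm : 1 < m) (h : ¬ m ∣ a + 1) :
    (Nat.digits m (a + 1)).sum = (Nat.digits m a).sum + 1 := by
  have hlt : a % m + 1 < m := by
    by_contra! hge
    have : a % m + 1 = m := le_antisymm (Nat.mod_lt a (by omega)) hge
    exact h ⟨a / m + 1, by linarith [Nat.mod_add_div a m]⟩
  obtain ⟨r, q, hr, rfl⟩ : ∃ r q, r + 1 < m ∧ a = r + m * q :=
    ⟨a % m, a / m, hlt, (Nat.mod_add_div a m).symm⟩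
  rw [show r + m * q + 1 = (r + 1) + m * q by ring, Nat.digits_sum_add_mul_s11 hm hr,
    Nat.digits_sum_add_mul_s11 hm (by omega)]
  ring

def digitSumMod (m n : ℕ) : ZMod m := ((Nat.digits m n).sum : ℕ)

theorem tm_eq_tm_iff {m a b : ℕ} : tm m a = tm m b ↔ digitSumMod m a = digitSumMod m b :=
  (ZMod.natCast_eq_natCast_iff' _ _ _).symm

theorem digitSumMod_succ_of_not_dvd {m a : ℕ} (hm : 1 < m) (h : ¬ m ∣ a + 1) :
    digitSumMod m (a + 1) = digitSumMod m a + 1 := by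
  simp only [digitSumMod, Nat.digits_sum_succ_of_not_dvd hm h, Nat.cast_add, Nat.cast_one]

theorem digitSumMod_ascending_of_dvd {m K : ℕ} (hm : 2 < m) (hK : m ∣ K) :
    digitSumMod m (K + 1) = digitSumMod m K + 1 ∧
      digitSumMod m (K + 2) = digitSumMod m K + 2 := by
  have h1 : ¬ m ∣ K + 1 := fun h => by
    have := Nat.le_of_dvd one_pos ((Nat.dvd_add_right hK).mp h); omega
  have h2 : ¬ m ∣ K + 1 + 1 := fun h => by
    have := Nat.le_of_dvd two_pos ((Nat.dvd_add_right hK).mp h); omega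
  have e1 := digitSumMod_succ_of_not_dvd (by omega) h1
  refine ⟨e1, ?_⟩
  rw [digitSumMod_succ_of_not_dvd (by omega) h2, e1]
  ring

theorem digitSumMod_not_descending {m : ℕ} (hm : 2 < m) (B : ℕ) (s : ZMod m)
    (h0 : digitSumMod m B = s + 2) (h1 : digitSumMod m (B + 1) = s + 1)
    (h2 : digitSumMod m (B + 2) = s) : False := by
  have two_ne : ((2 : ℕ) : ZMod m) ≠ 0 := by
    rw [Ne, ZMod.natCast_eq_zero_iff]
    exact fun h => absurd (Nat.le_of_dvd two_pos h) (by omega)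
  apply two_ne
  push_cast
  by_cases hB : m ∣ B + 1
  · have hB' : ¬ m ∣ B + 1 + 1 := fun h => by
      have := Nat.le_of_dvd one_pos ((Nat.dvd_add_right hB).mp h); omega
    have := digitSumMod_succ_of_not_dvd (by omega) hB'
    rw [h1, show B + 1 + 1 = B + 2 from rfl, h2] at this
    linear_combination -this
  · have := digitSumMod_succ_of_not_dvd (by omega) hB
    rw [h0, h1] at this
    linear_combination -this

/-- For `m ≥ 3` the `TM_m` sequence is not eventually palindromic. -/
theorem tm_not_eventually_palindromic (m : ℕ) (hm : 3 ≤ m) :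
    ¬ ∃ N : ℕ, Palindromic fun n => tm m (n + N) := by
  rintro ⟨N, hpal⟩
  set K := m * (N + 1)
  have hNK : N + 1 ≤ K := Nat.le_mul_of_pos_left _ (by omega)
  obtain ⟨n, hn, hsym⟩ := hpal.exists_ge (K - N + 2)
  set B := n - (K - N) - 2 + N
  have reflect (i j : ℕ) (hij : i + j = 2) : digitSumMod m (K + i) = digitSumMod m (B + j) := by
    have := tm_eq_tm_iff.mp (hsym (K - N + i) (by omega))
    rwa [show K - N + i + N = K + i by omega, show n - (K - N + i) + N = B + j by omega] at this
  obtain ⟨asc1, asc2⟩ := digitSumMod_ascending_of_dvd (by omega) (dvd_mul_right m (N + 1))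
  exact digitSumMod_not_descending (by omega) B (digitSumMod m K)
    ((reflect 2 0 rfl).symm.trans asc2) ((reflect 1 1 rfl).symm.trans asc1) (reflect 0 2 rfl).symm
end

section
/- Let (t_n)_{n≥0} be the TM_2 sequence. For every positive integer n and every k with 0 ≤ k ≤ 4^n − 1, one has t_k = t_{4^n − 1 − k}; that is, each initial segment of the Thue–Morse sequence of length 4^n is a palindrome. -/
/-!
Complementing `k < 2 ^ N` to `2 ^ N - 1 - k` flips each of its `N` binary digits, so the two
binary digit sums add up to `N`. For `N = 2n` even, the two digit sums then have the same parity.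
-/

lemma digits_two_sum_two_mul_add (m b : ℕ) (hb : b < 2) :
    (Nat.digits 2 (2 * m + b)).sum = (Nat.digits 2 m).sum + b := by
  rcases Nat.eq_zero_or_pos (2 * m + b) with h | h
  · obtain ⟨rfl, rfl⟩ : m = 0 ∧ b = 0 := by omega
    simp
  · rw [Nat.digits_def' (by norm_num) h, List.sum_cons, Nat.mul_add_div two_pos,
      Nat.div_eq_of_lt hb, add_zero]
    omega

lemma digits_two_sum_add_sum_compl (N k : ℕ) (hk : k < 2 ^ N) :
    (Nat.digits 2 k).sum + (Nat.digits 2 (2 ^ N - 1 - k)).sum = N := by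
  induction N generalizing k with
  | zero =>
    obtain rfl : k = 0 := by omega
    simp
  | succ N ih =>
    have hpow : 2 ^ (N + 1) = 2 * 2 ^ N := by ring
    have hcompl : 2 ^ (N + 1) - 1 - k = 2 * (2 ^ N - 1 - k / 2) + (1 - k % 2) := by omega
    have hhalf := ih (k / 2) (by omega)
    nth_rw 1 [← Nat.div_add_mod k 2]
    rw [digits_two_sum_two_mul_add _ _ (Nat.mod_lt _ two_pos), hcompl,
      digits_two_sum_two_mul_add _ _ (by omega)]
    omega

theorem tm_two_initial_segment_palindrome_general (n : ℕ) (k : ℕ)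
    (hk : k ≤ 4 ^ n - 1) : tm 2 k = tm 2 (4 ^ n - 1 - k) := by
  have h4 : (4 : ℕ) ^ n = 2 ^ (2 * n) := by rw [pow_mul]; norm_num
  have hpos : 0 < 2 ^ (2 * n) := by positivity
  have hsum := digits_two_sum_add_sum_compl (2 * n) k (by omega)
  rw [h4] at hk ⊢
  unfold tm
  omega

/-- Every initial segment of the Thue–Morse sequence of length `4 ^ n` is a
palindrome. -/
theorem tm_two_initial_segment_palindrome (n : ℕ) (hn : 0 < n) (k : ℕ)
    (hk : k ≤ 4 ^ n - 1) : tm 2 k = tm 2 (4 ^ n - 1 - k) :=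
  tm_two_initial_segment_palindrome_general n k hk
end

section
/- For m ≥ 3, the word 011 occurs infinitely often in the TM_m sequence: the set of nonnegative integers k such that t_k = 0, t_{k+1} = 1, and t_{k+2} = 1 is infinite. -/
/-!
Shifting `n < m ^ e` by `m ^ e * c` with `tm m c = 0` does not change `tm m n`, since the digits
of `c` are simply appended to those of `n`. So one occurrence `k, k + 1, k + 2 < m ^ e` of `011`
yields the occurrences `k + m ^ (e + j) * c` for all `j`; take `c = m ^ m - 1`, whose `m` digits
`m - 1` sum to `m * (m - 1)`. For the first one take
`k = m ^ (m - 1) - 2`: its digits are `m - 2` followed by `m - 2` digits `m - 1`, so the digit sums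
of `k, k + 1, k + 2 = m ^ (m - 1)` are `(m - 2) * m`, `(m - 1) ^ 2` and `1`.
-/

theorem digits_sum_add_base_mul {b x : ℕ} (hb : 1 < b) (hx : x < b) (y : ℕ) :
    (b.digits (x + b * y)).sum = x + (b.digits y).sum := by
  by_cases h : x = 0 ∧ y = 0
  · simp [h.1, h.2]
  · rw [Nat.digits_add b hb x y hx (by tauto), List.sum_cons]

theorem digits_sum_add_base_pow_mul {b : ℕ} (hb : 1 < b) {e n : ℕ} (hn : n < b ^ e) (c : ℕ) :
    (b.digits (n + b ^ e * c)).sum = (b.digits n).sum + (b.digits c).sum := by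
  induction e generalizing n with
  | zero => simp_all
  | succ e ih =>
    have hdiv : n / b < b ^ e := Nat.div_lt_of_lt_mul (by rwa [← pow_succ'])
    have hsplit : n + b ^ (e + 1) * c = n % b + b * (n / b + b ^ e * c) := by
      rw [pow_succ', mul_assoc, mul_add, ← add_assoc, Nat.mod_add_div]
    rw [hsplit, digits_sum_add_base_mul hb (n.mod_lt (by omega)), ih hdiv,
      ← add_assoc, ← digits_sum_add_base_mul hb (n.mod_lt (by omega)), Nat.mod_add_div]

theorem digits_sum_base_pow_sub_one {b : ℕ} (hb : 1 < b) (e : ℕ) :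
    (b.digits (b ^ e - 1)).sum = e * (b - 1) := by
  induction e with
  | zero => simp
  | succ e ih =>
    have hpos : 0 < b ^ e := by positivity
    have hsplit : b ^ (e + 1) - 1 = (b - 1) + b * (b ^ e - 1) := by
      rw [pow_succ', Nat.mul_sub, mul_one]
      have : b ≤ b * b ^ e := Nat.le_mul_of_pos_right b hpos
      omega
    rw [hsplit, digits_sum_add_base_mul hb (by omega), ih]
    ring

theorem digits_sum_base_pow_sub_two {b : ℕ} (hb : 1 < b) (e : ℕ) :
    (b.digits (b ^ (e + 1) - 2)).sum = (b - 2) + e * (b - 1) := by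
  have hpos : 0 < b ^ e := by positivity
  have hsplit : b ^ (e + 1) - 2 = (b - 2) + b * (b ^ e - 1) := by
    rw [pow_succ', Nat.mul_sub, mul_one]
    have : b ≤ b * b ^ e := Nat.le_mul_of_pos_right b hpos
    omega
  rw [hsplit, digits_sum_add_base_mul hb (by omega), digits_sum_base_pow_sub_one hb]

theorem digits_sum_base_pow {b : ℕ} (hb : 1 < b) (e : ℕ) : (b.digits (b ^ e)).sum = 1 := by
  simpa [Nat.digits_of_lt b 1 one_ne_zero hb] using
    digits_sum_add_base_pow_mul hb (Nat.pow_pos (n := e) (by omega : 0 < b)) 1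

theorem tm_add_base_pow_mul {m e n c : ℕ} (hm : 1 < m) (hn : n < m ^ e) (hc : tm m c = 0) :
    tm m (n + m ^ e * c) = tm m n := by
  unfold tm at hc ⊢
  rw [digits_sum_add_base_pow_mul hm hn, Nat.add_mod, hc, add_zero, Nat.mod_mod]

theorem tm_base_pow_self_sub_one {m : ℕ} (hm : 1 < m) : tm m (m ^ m - 1) = 0 := by
  rw [tm, digits_sum_base_pow_sub_one hm, Nat.mul_mod_right]

theorem tm_base_pow_pred_sub_two {m : ℕ} (hm : 1 < m) : tm m (m ^ (m - 1) - 2) = 0 := by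
  obtain ⟨n, rfl⟩ : ∃ n, m = n + 2 := ⟨m - 2, by omega⟩
  simp only [tm, show n + 2 - 1 = n + 1 from rfl, digits_sum_base_pow_sub_two hm,
    Nat.add_sub_cancel]
  rw [show n + n * (n + 1) = n * (n + 2) by ring, Nat.mul_mod_left]

theorem tm_base_pow_pred_sub_one {m : ℕ} (hm : 1 < m) : tm m (m ^ (m - 1) - 1) = 1 := by
  obtain ⟨n, rfl⟩ : ∃ n, m = n + 2 := ⟨m - 2, by omega⟩
  rw [tm, digits_sum_base_pow_sub_one hm, show n + 2 - 1 = n + 1 from rfl,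
    show (n + 1) * (n + 1) = 1 + (n + 2) * n by ring, Nat.add_mul_mod_self_left]
  exact Nat.mod_eq_of_lt hm

theorem tm_base_pow {m : ℕ} (hm : 1 < m) (e : ℕ) : tm m (m ^ e) = 1 := by
  rw [tm, digits_sum_base_pow hm, Nat.mod_eq_of_lt hm]

/-- For `m ≥ 3`, the word `011` occurs infinitely often in the `TM_m` sequence. -/
theorem tm_011_infinitely_often (m : ℕ) (hm : 3 ≤ m) :
    {k : ℕ | tm m k = 0 ∧ tm m (k + 1) = 1 ∧ tm m (k + 2) = 1}.Infinite := by
  have hm1 : 1 < m := by omega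
  set k := m ^ (m - 1) - 2
  have hk2 : k + 2 = m ^ (m - 1) := by
    have : m ≤ m ^ (m - 1) := Nat.le_self_pow (by omega) m
    omega
  have hk1 : k + 1 = m ^ (m - 1) - 1 := by omega
  have hc : tm m (m ^ m - 1) = 0 := tm_base_pow_self_sub_one hm1
  have hc0 : 0 < m ^ m - 1 := by
    have : m ≤ m ^ m := Nat.le_self_pow (by omega) m
    omega
  refine Set.infinite_of_injective_forall_mem (f := fun j => k + m ^ (m + j) * (m ^ m - 1))
    (StrictMono.injective fun i j hij => ?_) fun j => ?_
  · gcongr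
  have hlt : k + 2 < m ^ (m + j) := hk2 ▸ Nat.pow_lt_pow_right hm1 (by omega)
  refine ⟨?_, ?_, ?_⟩
  · rw [tm_add_base_pow_mul hm1 (by omega) hc]
    exact tm_base_pow_pred_sub_two hm1
  · rw [add_right_comm, tm_add_base_pow_mul hm1 (by omega) hc, hk1]
    exact tm_base_pow_pred_sub_one hm1
  · rw [add_right_comm, tm_add_base_pow_mul hm1 hlt hc, hk2]
    exact tm_base_pow hm1 _
end

section
/- For m ≥ 3, the word 110 never occurs in the TM_m sequence: there is no nonnegative integer k such that t_k = 1, t_{k+1} = 1, and t_{k+2} = 0. -/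
theorem Nat.digits_sum_add_mul_s15 {b x : ℕ} (hb : 1 < b) (hx : x < b) (y : ℕ) :
    (Nat.digits b (x + b * y)).sum = x + (Nat.digits b y).sum := by
  rcases eq_or_ne x 0 with rfl | hx0
  · rcases eq_or_ne y 0 with rfl | hy0
    · simp
    · rw [Nat.digits_add b hb 0 y hx (.inr hy0), List.sum_cons]
  · rw [Nat.digits_add b hb x y hx (.inl hx0), List.sum_cons]

theorem Nat.digits_sum_add_one {b n : ℕ} (hb : 1 < b) (h : ¬ b ∣ n + 1) :
    (Nat.digits b (n + 1)).sum = (Nat.digits b n).sum + 1 := by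
  have hdecomp := Nat.mod_add_div n b
  have hlast : n % b + 1 < b := by
    refine lt_of_le_of_ne (Nat.mod_lt n (by omega)) fun heq => h ⟨n / b + 1, ?_⟩
    rw [mul_add, mul_one]
    omega
  have hn := Nat.digits_sum_add_mul_s15 hb (Nat.mod_lt n (by omega)) (n / b)
  have hn1 := Nat.digits_sum_add_mul_s15 hb hlast (n / b)
  rw [hdecomp] at hn
  rw [add_right_comm, hdecomp] at hn1
  omega

theorem tm_add_one {m n : ℕ} (hm : 1 < m) (h : ¬ m ∣ n + 1) :
    tm m (n + 1) = (tm m n + 1) % m := by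
  rw [tm, tm, Nat.digits_sum_add_one hm h, Nat.mod_add_mod]

/-- For `m ≥ 3`, the word `110` never occurs in the `TM_m` sequence. -/
theorem tm_110_never_occurs (m : ℕ) (hm : 3 ≤ m) :
    ¬ ∃ k : ℕ, tm m k = 1 ∧ tm m (k + 1) = 1 ∧ tm m (k + 2) = 0 := by
  rintro ⟨k, h0, h1, h2⟩
  have two_mod : 2 % m = 2 := Nat.mod_eq_of_lt hm
  by_cases hdvd : m ∣ k + 1
  · have hndvd : ¬ m ∣ k + 1 + 1 := fun h => by
      have := Nat.le_of_dvd one_pos ((Nat.dvd_add_right hdvd).mp h)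
      omega
    have := tm_add_one (by omega) hndvd
    rw [h1, h2, two_mod] at this
    omega
  · have := tm_add_one (by omega) hdvd
    rw [h0, h1, two_mod] at this
    omega
end
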